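/- Let α > 0, μ > 0, ν > 0 and γ, σ, δ be real. Then for every t > 0, ∫₀ᵗ (t−s)^{μ−1} E_{α,μ}^{γ}(δ(t−s)^α) · s^{ν−1} E_{α,ν}^{σ}(δ s^α) ds = t^{μ+ν−1} E_{α,μ+ν}^{γ+σ}(δ t^α). -/

import Mathlib

/-- The three-parameter Mittag-Leffler (Prabhakar) function
`E_{α,β}^{γ}(z) = ∑_{k=0}^∞ (γ)_k z^k / (Γ(αk+β) k!)`. -/
noncomputable def prabE (α β γ z : ℝ) : ℝ :=
  ∑' k : ℕ, (ascPochhammer ℝ k).eval γ * z ^ k /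
    (Real.Gamma (α * k + β) * (k.factorial : ℝ))

/-!
Write `e_β^γ(x) = x^{β-1} E_{α,β}^{γ}(δ x^α)`. For `x > 0` it expands as
`∑ₖ (γ)ₖ/k! · δ^k · x^{αk+β-1}/Γ(αk+β)`, a combination of Riemann–Liouville kernels
`x^{p-1}/Γ(p)`, and these form a convolution semigroup by the Beta integral. Multiplying the two
absolutely convergent expansions, integrating term by term and grouping the terms with `j + k = n`,
the Vandermonde identity `(γ+σ)ₙ/n! = ∑_{j+k=n} (γ)ⱼ/j! · (σ)ₖ/k!` produces the `n`-th term of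
`e_{μ+ν}^{γ+σ}(t)`. Termwise integration is justified by the same computation with `|γ|, |σ|, |δ|`:
it bounds the integrals of the absolute values by the terms of a convergent series of this shape.
-/

open Filter Finset MeasureTheory

theorem Ring.multichoose_add {R : Type*} [Ring R] [BinomialRing R] {r s : R} (h : Commute r s)
    (n : ℕ) : Ring.multichoose (r + s) n =
      ∑ ij ∈ antidiagonal n, Ring.multichoose r ij.1 * Ring.multichoose s ij.2 := by
  -- `multichoose r k = (-1)^k choose (-r) k` reduces this to Chu–Vandermonde for `choose`.
  have key : ∀ (x : R) (k : ℕ), Ring.multichoose x k = Int.negOnePow k • Ring.choose (-x) k := by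
    intro x k
    rw [Ring.choose_neg', smul_smul, ← Int.negOnePow_add, ← two_mul, Int.negOnePow_two_mul,
      one_smul]
  rw [key, neg_add, Ring.add_choose_eq n h.neg_left.neg_right, smul_sum]
  refine sum_congr rfl fun ij hij => ?_
  rw [key r, key s, smul_mul_smul_comm, ← Int.negOnePow_add, ← Nat.cast_add,
    mem_antidiagonal.mp hij]

theorem Real.multichoose_eq_ascPochhammer_div (r : ℝ) (n : ℕ) :
    Ring.multichoose r n = (ascPochhammer ℝ n).eval r / n.factorial := by
  rw [eq_div_iff (by positivity), mul_comm, ← nsmul_eq_mul,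
    Ring.factorial_nsmul_multichoose_eq_ascPochhammer, Polynomial.ascPochhammer_smeval_eq_eval]

theorem Real.multichoose_succ (r : ℝ) (n : ℕ) :
    Ring.multichoose r (n + 1) = Ring.multichoose r n * ((r + n) / (n + 1)) := by
  rw [Real.multichoose_eq_ascPochhammer_div, Real.multichoose_eq_ascPochhammer_div,
    ascPochhammer_succ_eval, Nat.factorial_succ]
  push_cast
  field_simp

theorem Real.multichoose_nonneg {r : ℝ} (hr : 0 ≤ r) (n : ℕ) : 0 ≤ Ring.multichoose r n := by
  induction n with
  | zero => simp
  | succ n ih => rw [Real.multichoose_succ]; positivity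

theorem Real.abs_multichoose_le (r : ℝ) (n : ℕ) :
    |Ring.multichoose r n| ≤ Ring.multichoose |r| n := by
  induction n with
  | zero => simp
  | succ n ih =>
    rw [Real.multichoose_succ, Real.multichoose_succ, abs_mul, abs_div,
      abs_of_pos (by positivity : (0 : ℝ) < n + 1)]
    have := Real.multichoose_nonneg (abs_nonneg r) n
    have : |r + n| ≤ |r| + n := by simpa using abs_add_le r n
    gcongr

theorem Real.multichoose_le_add_one_pow {r : ℝ} (hr : 0 ≤ r) (n : ℕ) :
    Ring.multichoose r n ≤ (r + 1) ^ n := by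
  induction n with
  | zero => simp
  | succ n ih =>
    rw [Real.multichoose_succ, pow_succ]
    have := Real.multichoose_nonneg hr n
    gcongr
    rw [div_le_iff₀ (by positivity)]
    nlinarith [(Nat.cast_nonneg n : (0:ℝ) ≤ n)]

theorem summable_of_nonneg_of_summable_sum_antidiagonal {A : Type*} [AddMonoid A]
    [HasAntidiagonal A] {f : A × A → ℝ} (hf : 0 ≤ f)
    (h : Summable fun n => ∑ kl ∈ antidiagonal n, f kl) : Summable f := by
  rw [← HasAntidiagonal.sigmaAntidiagonalEquivProd.summable_iff]
  refine (summable_sigma_of_nonneg fun _ => hf _).mpr ⟨fun n => (hasSum_fintype _).summable, ?_⟩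
  simpa [Finset.sum_attach] using h

theorem HasSum.sum_antidiagonal {A M : Type*} [AddMonoid A] [HasAntidiagonal A]
    [AddCommMonoid M] [TopologicalSpace M] [ContinuousAdd M] [RegularSpace M]
    {f : A × A → M} {a : M} (h : HasSum f a) : HasSum (fun n => ∑ kl ∈ antidiagonal n, f kl) a := by
  have := (HasAntidiagonal.sigmaAntidiagonalEquivProd.hasSum_iff.mpr h).sigma
    fun n => hasSum_fintype _
  simpa [Finset.sum_attach] using this

theorem Real.rpow_le_sq_mul_exp_mul_Gamma {K x : ℝ} (hK : 1 ≤ K) (hx : 2 ≤ x) :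
    K ^ x ≤ K ^ 2 * Real.exp K * Real.Gamma x := by
  have h2 : 2 ≤ ⌊x⌋₊ := Nat.le_floor (by exact_mod_cast hx)
  obtain ⟨n, hn⟩ : ∃ n : ℕ, ⌊x⌋₊ = n + 1 := ⟨⌊x⌋₊ - 1, by omega⟩
  have hnx : (n : ℝ) + 1 ≤ x := by exact_mod_cast hn ▸ Nat.floor_le (by linarith)
  have hxn : x ≤ (n : ℝ) + 2 := by
    have := Nat.lt_floor_add_one x
    rw [hn] at this; push_cast at this; linarith
  have hΓ : (n.factorial : ℝ) ≤ Real.Gamma x := by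
    rw [← Real.Gamma_nat_eq_factorial]
    exact Real.Gamma_strictMonoOn_Ici.monotoneOn
      (Set.mem_Ici.mpr (by exact_mod_cast (by omega : 2 ≤ n + 1)))
      (Set.mem_Ici.mpr hx) hnx
  have hexp : K ^ n ≤ Real.exp K * n.factorial := by
    have := Real.pow_div_factorial_le_exp K (by linarith) n
    rwa [div_le_iff₀ (by positivity)] at this
  calc K ^ x ≤ K ^ ((n + 2 : ℕ) : ℝ) := Real.rpow_le_rpow_of_exponent_le hK (by push_cast; linarith)
    _ = K ^ 2 * K ^ n := by rw [Real.rpow_natCast, pow_add, mul_comm]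
    _ ≤ K ^ 2 * (Real.exp K * Real.Gamma x) := by gcongr; exact hexp.trans (by gcongr)
    _ = _ := by ring

theorem summable_norm_pow_div_Gamma {α : ℝ} (hα : 0 < α) (β r : ℝ) :
    Summable fun k : ℕ => ‖r ^ k / Real.Gamma (α * k + β)‖ := by
  set K := (2 * |r| + 1) ^ α⁻¹
  have hK : 1 ≤ K := Real.one_le_rpow (by linarith [abs_nonneg r]) (by positivity)
  have hKα : K ^ α = 2 * |r| + 1 := Real.rpow_inv_rpow (by positivity) hα.ne'
  have hlarge : ∀ᶠ k : ℕ in atTop, 2 ≤ α * k + β :=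
    (tendsto_atTop_add_const_right _ β
      (tendsto_natCast_atTop_atTop.const_mul_atTop hα)).eventually_ge_atTop 2
  -- Once `α k + β ≥ 2`, `Γ(α k + β) ≥ K^(α k + β) / (K² e^K)`, and `K^α = 2|r| + 1` makes the
  -- resulting bound geometric with ratio `1/2`.
  refine .of_norm_bounded_eventually_nat
    ((summable_geometric_two).mul_left (K ^ 2 * Real.exp K / K ^ β)) ?_
  filter_upwards [hlarge] with k hk
  have hΓ : 0 < Real.Gamma (α * k + β) := Real.Gamma_pos_of_pos (by linarith)
  have hKk : K ^ (α * k + β) = (2 * |r| + 1) ^ k * K ^ β := by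
    rw [Real.rpow_add (by linarith), Real.rpow_mul (by linarith), hKα, Real.rpow_natCast]
  rw [norm_norm, norm_div, norm_pow, Real.norm_eq_abs, Real.norm_of_nonneg hΓ.le,
    div_le_iff₀ hΓ]
  calc |r| ^ k ≤ ((2 * |r| + 1) / 2) ^ k := by gcongr; linarith
    _ = (1 / 2) ^ k * K ^ (α * k + β) / K ^ β := by
        rw [hKk, div_pow, one_div_pow]; field_simp
    _ ≤ (1 / 2) ^ k * (K ^ 2 * Real.exp K * Real.Gamma (α * k + β)) / K ^ β := by
        gcongr; exact Real.rpow_le_sq_mul_exp_mul_Gamma hK hk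
    _ = _ := by ring

theorem integral_rpow_mul_rpow_sub {p q t : ℝ} (hp : 0 < p) (hq : 0 < q) (ht : 0 < t) :
    ∫ s in (0 : ℝ)..t, s ^ (p - 1) * (t - s) ^ (q - 1) =
      t ^ (p + q - 1) * (Real.Gamma p * Real.Gamma q / Real.Gamma (p + q)) := by
  rw [mul_div_assoc', eq_div_iff (Real.Gamma_pos_of_pos (by linarith)).ne']
  apply Complex.ofReal_injective
  have hI : ((∫ s in (0 : ℝ)..t, s ^ (p - 1) * (t - s) ^ (q - 1) : ℝ) : ℂ) =
      ∫ s in (0 : ℝ)..t, (s : ℂ) ^ ((p : ℂ) - 1) * ((t : ℂ) - s) ^ ((q : ℂ) - 1) := by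
    rw [← intervalIntegral.integral_ofReal]
    refine intervalIntegral.integral_congr fun s hs => ?_
    rw [Set.uIcc_of_le ht.le] at hs
    push_cast [Complex.ofReal_cpow hs.1, Complex.ofReal_cpow (sub_nonneg.mpr hs.2)]
    rfl
  push_cast [hI, Complex.betaIntegral_scaled _ _ ht, ← Complex.Gamma_ofReal,
    Complex.ofReal_cpow ht.le]
  rw [Complex.Gamma_mul_Gamma_eq_betaIntegral (by simpa) (by simpa)]
  ring

noncomputable def riemannLiouvilleKernel (p x : ℝ) : ℝ := x ^ (p - 1) / Real.Gamma p

theorem riemannLiouvilleKernel_nonneg {p x : ℝ} (hp : 0 < p) (hx : 0 ≤ x) :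
    0 ≤ riemannLiouvilleKernel p x :=
  div_nonneg (Real.rpow_nonneg hx _) (Real.Gamma_pos_of_pos hp).le

theorem integral_riemannLiouvilleKernel_sub_mul {p q t : ℝ} (hp : 0 < p) (hq : 0 < q)
    (ht : 0 < t) :
    ∫ s in (0 : ℝ)..t, riemannLiouvilleKernel p (t - s) * riemannLiouvilleKernel q s =
      riemannLiouvilleKernel (p + q) t := by
  have hΓp := (Real.Gamma_pos_of_pos hp).ne'
  have hΓq := (Real.Gamma_pos_of_pos hq).ne'
  calc _ = ∫ s in (0 : ℝ)..t,
          (Real.Gamma p * Real.Gamma q)⁻¹ * (s ^ (q - 1) * (t - s) ^ (p - 1)) := by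
        simp only [riemannLiouvilleKernel]; congr 1; ext s; field_simp
    _ = _ := by
        rw [intervalIntegral.integral_const_mul, integral_rpow_mul_rpow_sub hq hp ht, add_comm q p,
          riemannLiouvilleKernel]
        field_simp

theorem intervalIntegrable_riemannLiouvilleKernel_sub_mul {p q t : ℝ} (hp : 0 < p) (hq : 0 < q)
    (ht : 0 < t) :
    IntervalIntegrable (fun s => riemannLiouvilleKernel p (t - s) * riemannLiouvilleKernel q s)
      volume 0 t := by
  -- A non-integrable integrand would have integral `0`, but this integral is positive.
  refine intervalIntegral.intervalIntegrable_of_integral_ne_zero ?_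
  rw [integral_riemannLiouvilleKernel_sub_mul hp hq ht, riemannLiouvilleKernel]
  have := Real.Gamma_pos_of_pos (add_pos hp hq)
  positivity

theorem prabE_eq_tsum (α β γ z : ℝ) :
    prabE α β γ z = ∑' k : ℕ, Ring.multichoose γ k * z ^ k / Real.Gamma (α * k + β) := by
  refine tsum_congr fun k => ?_
  rw [Real.multichoose_eq_ascPochhammer_div]
  field_simp

theorem summable_norm_multichoose_mul_pow_div_Gamma {α : ℝ} (hα : 0 < α) (β γ z : ℝ) :
    Summable fun k : ℕ => ‖Ring.multichoose γ k * z ^ k / Real.Gamma (α * k + β)‖ := by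
  refine (summable_norm_pow_div_Gamma hα β ((|γ| + 1) * |z|)).of_nonneg_of_le
    (fun _ => norm_nonneg _) fun k => ?_
  simp only [norm_div, norm_mul, norm_pow, Real.norm_eq_abs, mul_pow, abs_abs]
  gcongr
  rw [abs_of_nonneg (by positivity : 0 ≤ |γ| + 1)]
  exact (Real.abs_multichoose_le γ k).trans (Real.multichoose_le_add_one_pow (abs_nonneg γ) k)

noncomputable def prabKernel (α β γ δ x : ℝ) : ℝ := x ^ (β - 1) * prabE α β γ (δ * x ^ α)

noncomputable def prabTerm (α β γ δ : ℝ) (k : ℕ) (x : ℝ) : ℝ :=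
  Ring.multichoose γ k * δ ^ k * riemannLiouvilleKernel (α * k + β) x

theorem prabTerm_eq {x : ℝ} (hx : 0 < x) (α β γ δ : ℝ) (k : ℕ) :
    prabTerm α β γ δ k x =
      x ^ (β - 1) * (Ring.multichoose γ k * (δ * x ^ α) ^ k / Real.Gamma (α * k + β)) := by
  rw [prabTerm, riemannLiouvilleKernel, mul_pow, ← Real.rpow_natCast (x ^ α),
    ← Real.rpow_mul hx.le, show α * k + β - 1 = α * k + (β - 1) by ring,
    Real.rpow_add hx]
  ring

theorem summable_norm_prabTerm {α : ℝ} (hα : 0 < α) (β γ δ : ℝ) {x : ℝ} (hx : 0 < x) :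
    Summable fun k => ‖prabTerm α β γ δ k x‖ := by
  simp_rw [prabTerm_eq hx, norm_mul]
  exact (summable_norm_multichoose_mul_pow_div_Gamma hα β γ _).mul_left _

theorem hasSum_prabTerm {α : ℝ} (hα : 0 < α) (β γ δ : ℝ) {x : ℝ} (hx : 0 < x) :
    HasSum (prabTerm α β γ δ · x) (prabKernel α β γ δ x) := by
  simp_rw [prabTerm_eq hx, prabKernel, prabE_eq_tsum]
  exact ((summable_norm_multichoose_mul_pow_div_Gamma hα β γ _).of_norm.hasSum).mul_left _

theorem norm_prabTerm_le {α β : ℝ} (hα : 0 ≤ α) (hβ : 0 < β) (γ δ : ℝ) (k : ℕ) {x : ℝ}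
    (hx : 0 ≤ x) : ‖prabTerm α β γ δ k x‖ ≤ prabTerm α β |γ| |δ| k x := by
  have hK := riemannLiouvilleKernel_nonneg (by positivity : 0 < α * k + β) hx
  simp only [prabTerm, norm_mul, norm_pow, Real.norm_eq_abs, abs_of_nonneg hK]
  have := Real.multichoose_nonneg (abs_nonneg γ) k
  gcongr
  exact Real.abs_multichoose_le γ k

theorem integral_prabTerm_sub_mul_prabTerm {α μ ν t : ℝ} (hα : 0 ≤ α) (hμ : 0 < μ) (hν : 0 < ν)
    (ht : 0 < t) (γ σ δ : ℝ) (j k : ℕ) :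
    ∫ s in (0 : ℝ)..t, prabTerm α μ γ δ j (t - s) * prabTerm α ν σ δ k s =
      Ring.multichoose γ j * Ring.multichoose σ k * δ ^ (j + k) *
        riemannLiouvilleKernel (α * ↑(j + k) + (μ + ν)) t := by
  have hp : 0 < α * j + μ := by positivity
  have hq : 0 < α * k + ν := by positivity
  calc _ = ∫ s in (0 : ℝ)..t, Ring.multichoose γ j * Ring.multichoose σ k * δ ^ (j + k) *
          (riemannLiouvilleKernel (α * j + μ) (t - s) * riemannLiouvilleKernel (α * k + ν) s) := by
        simp only [prabTerm]; congr 1; ext s; ring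
    _ = _ := by
        rw [intervalIntegral.integral_const_mul, integral_riemannLiouvilleKernel_sub_mul hp hq ht]
        push_cast; ring_nf

theorem intervalIntegrable_prabTerm_sub_mul_prabTerm {α μ ν t : ℝ} (hα : 0 ≤ α) (hμ : 0 < μ)
    (hν : 0 < ν) (ht : 0 < t) (γ σ δ : ℝ) (j k : ℕ) :
    IntervalIntegrable (fun s => prabTerm α μ γ δ j (t - s) * prabTerm α ν σ δ k s) volume 0 t := by
  convert (intervalIntegrable_riemannLiouvilleKernel_sub_mul (by positivity : 0 < α * j + μ)
    (by positivity : 0 < α * k + ν) ht).const_mul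
    (Ring.multichoose γ j * δ ^ j * (Ring.multichoose σ k * δ ^ k)) using 1
  ext s
  simp only [prabTerm]
  ring

theorem sum_antidiagonal_integral_prabTerm_sub_mul_prabTerm {α μ ν t : ℝ} (hα : 0 ≤ α)
    (hμ : 0 < μ) (hν : 0 < ν) (ht : 0 < t) (γ σ δ : ℝ) (n : ℕ) :
    ∑ jk ∈ antidiagonal n,
        ∫ s in (0 : ℝ)..t, prabTerm α μ γ δ jk.1 (t - s) * prabTerm α ν σ δ jk.2 s =
      prabTerm α (μ + ν) (γ + σ) δ n t := by
  rw [sum_congr rfl fun jk hjk => by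
    rw [integral_prabTerm_sub_mul_prabTerm hα hμ hν ht, mem_antidiagonal.mp hjk],
    ← sum_mul, ← sum_mul, ← Ring.multichoose_add (Commute.all γ σ), prabTerm]

theorem summable_integral_norm_prabTerm_sub_mul_prabTerm {α μ ν t : ℝ} (hα : 0 < α) (hμ : 0 < μ)
    (hν : 0 < ν) (ht : 0 < t) (γ σ δ : ℝ) :
    Summable fun jk : ℕ × ℕ =>
      ∫ s in (0 : ℝ)..t, ‖prabTerm α μ γ δ jk.1 (t - s) * prabTerm α ν σ δ jk.2 s‖ := by
  have hbound : ∀ (jk : ℕ × ℕ), ∀ s ∈ Set.Icc 0 t,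
      ‖prabTerm α μ γ δ jk.1 (t - s) * prabTerm α ν σ δ jk.2 s‖ ≤
        prabTerm α μ |γ| |δ| jk.1 (t - s) * prabTerm α ν |σ| |δ| jk.2 s := fun jk s hs => by
    rw [norm_mul]
    exact mul_le_mul (norm_prabTerm_le hα.le hμ γ δ jk.1 (sub_nonneg.mpr hs.2))
      (norm_prabTerm_le hα.le hν σ δ jk.2 hs.1) (norm_nonneg _)
      ((norm_nonneg _).trans (norm_prabTerm_le hα.le hμ γ δ jk.1 (sub_nonneg.mpr hs.2)))
  have hmajorant : Summable fun jk : ℕ × ℕ =>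
      ∫ s in (0 : ℝ)..t, prabTerm α μ |γ| |δ| jk.1 (t - s) * prabTerm α ν |σ| |δ| jk.2 s := by
    refine summable_of_nonneg_of_summable_sum_antidiagonal (fun jk => ?_) ?_
    · exact intervalIntegral.integral_nonneg ht.le fun s hs =>
        (norm_nonneg _).trans (hbound jk s hs)
    · simp_rw [sum_antidiagonal_integral_prabTerm_sub_mul_prabTerm hα.le hμ hν ht]
      exact (hasSum_prabTerm hα _ _ _ ht).summable
  refine hmajorant.of_nonneg_of_le
    (fun _ => intervalIntegral.integral_nonneg ht.le fun _ _ => norm_nonneg _) fun jk => ?_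
  exact intervalIntegral.integral_mono_on ht.le
    (intervalIntegrable_prabTerm_sub_mul_prabTerm hα.le hμ hν ht γ σ δ jk.1 jk.2).norm
    (intervalIntegrable_prabTerm_sub_mul_prabTerm hα.le hμ hν ht _ _ _ jk.1 jk.2) (hbound jk)

theorem hasSum_integral_prabTerm_sub_mul_prabTerm {α μ ν t : ℝ} (hα : 0 < α) (hμ : 0 < μ)
    (hν : 0 < ν) (ht : 0 < t) (γ σ δ : ℝ) :
    HasSum (fun jk : ℕ × ℕ =>
        ∫ s in (0 : ℝ)..t, prabTerm α μ γ δ jk.1 (t - s) * prabTerm α ν σ δ jk.2 s)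
      (∫ s in (0 : ℝ)..t, prabKernel α μ γ δ (t - s) * prabKernel α ν σ δ s) := by
  have hexpand : Set.EqOn (fun s => prabKernel α μ γ δ (t - s) * prabKernel α ν σ δ s)
      (fun s => ∑' jk : ℕ × ℕ, prabTerm α μ γ δ jk.1 (t - s) * prabTerm α ν σ δ jk.2 s)
      (Set.Ioo 0 t) := fun s hs => by
    dsimp only
    rw [← (hasSum_prabTerm hα μ γ δ (sub_pos.mpr hs.2)).tsum_eq,
      ← (hasSum_prabTerm hα ν σ δ hs.1).tsum_eq,
      tsum_mul_tsum_of_summable_norm (summable_norm_prabTerm hα μ γ δ (sub_pos.mpr hs.2))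
        (summable_norm_prabTerm hα ν σ δ hs.1)]
  have hnorm := summable_integral_norm_prabTerm_sub_mul_prabTerm hα hμ hν ht γ σ δ
  simp_rw [intervalIntegral.integral_of_le ht.le, integral_Ioc_eq_integral_Ioo] at hnorm ⊢
  rw [setIntegral_congr_fun measurableSet_Ioo hexpand]
  exact hasSum_integral_of_summable_integral_norm (fun jk =>
    (intervalIntegrable_iff_integrableOn_Ioo_of_le ht.le).mp
      (intervalIntegrable_prabTerm_sub_mul_prabTerm hα.le hμ hν ht γ σ δ jk.1 jk.2)) hnorm

/-- Convolution (semigroup) identity for Prabhakar kernels: for `α, μ, ν > 0` and `t > 0`,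
`∫₀ᵗ (t−s)^{μ−1} E_{α,μ}^{γ}(δ(t−s)^α) · s^{ν−1} E_{α,ν}^{σ}(δ s^α) ds
  = t^{μ+ν−1} E_{α,μ+ν}^{γ+σ}(δ t^α)`. -/
theorem prabhakar_kernel_convolution (α μ ν γ σ δ : ℝ)
    (hα : 0 < α) (hμ : 0 < μ) (hν : 0 < ν) (t : ℝ) (ht : 0 < t) :
    (∫ s in (0:ℝ)..t, (t - s) ^ (μ - 1) * prabE α μ γ (δ * (t - s) ^ α) *
        (s ^ (ν - 1) * prabE α ν σ (δ * s ^ α)))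
      = t ^ (μ + ν - 1) * prabE α (μ + ν) (γ + σ) (δ * t ^ α) := by
  change ∫ s in (0 : ℝ)..t, prabKernel α μ γ δ (t - s) * prabKernel α ν σ δ s =
    prabKernel α (μ + ν) (γ + σ) δ t
  have hsum := (hasSum_integral_prabTerm_sub_mul_prabTerm hα hμ hν ht γ σ δ).sum_antidiagonal
  simp_rw [sum_antidiagonal_integral_prabTerm_sub_mul_prabTerm hα.le hμ hν ht] at hsum
  exact hsum.unique (hasSum_prabTerm hα _ _ _ ht)
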